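/- Let δ ∈ (0,1) and define on ℂ the functions a(z) = -log(|z|² + δ²) (for |z|² + δ² < 1) and φ = -log a. Then φ is plurisubharmonic on the set where a > 1, i.e. where |z|² + δ² < e^{-1}: indeed ∂²φ/∂z∂z̄ = (|z|² - δ² log(|z|² + δ²)) / (log²(|z|²+δ²) (|z|²+δ²)²) ≥ 0 there. -/

import Mathlib

/-!
For a radial function `u ↦ F (|u|²)` one has `∂̄ F(|u|²) = F'(|u|²) u`, and applying `∂` to this gives
`F'(r) + F''(r) r` at `r = |z|²`. For `F s = -log (-log (s + δ²))` and `t = s + δ²` we get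
`F' = -1 / (t log t)` and `F'' = (log t + 1) / (t log t)²`, which combine to the stated quotient;
its numerator is nonnegative because `log t < 0`.
-/

open Complex Real MeasureTheory

/-- Wirtinger derivative ∂/∂z = (1/2)(∂/∂x - i ∂/∂y). -/
noncomputable def wDz (f : ℂ → ℂ) (z : ℂ) : ℂ :=
  (1/2) * (fderiv ℝ f z 1 - Complex.I * fderiv ℝ f z Complex.I)

/-- Wirtinger derivative ∂/∂z̄ = (1/2)(∂/∂x + i ∂/∂y). -/
noncomputable def wDzbar (f : ℂ → ℂ) (z : ℂ) : ℂ :=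
  (1/2) * (fderiv ℝ f z 1 + Complex.I * fderiv ℝ f z Complex.I)

open scoped Topology

theorem hasFDerivAt_ofReal_comp_norm_sq {F : ℝ → ℝ} {F' : ℝ} {w : ℂ}
    (hF : HasDerivAt F F' (‖w‖ ^ 2)) :
    HasFDerivAt (fun u : ℂ => (F (‖u‖ ^ 2) : ℂ))
      (ofRealCLM.comp (F' • 2 • innerSL ℝ w)) w :=
  ofRealCLM.hasFDerivAt.comp w (hF.comp_hasFDerivAt w (hasStrictFDerivAt_norm_sq w).hasFDerivAt)

theorem wDzbar_ofReal_comp_norm_sq {F : ℝ → ℝ} {F' : ℝ} {w : ℂ}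
    (hF : HasDerivAt F F' (‖w‖ ^ 2)) :
    wDzbar (fun u => (F (‖u‖ ^ 2) : ℂ)) w = F' * w := by
  rw [wDzbar, (hasFDerivAt_ofReal_comp_norm_sq hF).fderiv]
  apply Complex.ext <;> simp [Complex.inner] <;> ring

theorem wDz_ofReal_comp_norm_sq_mul_self {F : ℝ → ℝ} {F' : ℝ} {z : ℂ}
    (hF : HasDerivAt F F' (‖z‖ ^ 2)) :
    wDz (fun w => (F (‖w‖ ^ 2) : ℂ) * w) z = ((F (‖z‖ ^ 2) + F' * ‖z‖ ^ 2 : ℝ) : ℂ) := by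
  have hd : HasFDerivAt (fun w => (F (‖w‖ ^ 2) : ℂ) * w) _ z :=
    (hasFDerivAt_ofReal_comp_norm_sq hF).mul (hasFDerivAt_id z)
  rw [wDz, hd.fderiv]
  apply Complex.ext <;> simp [Complex.inner, Complex.sq_norm, Complex.normSq_apply] <;> ring

theorem wDz_wDzbar_ofReal_comp_norm_sq {F F' : ℝ → ℝ} {F'' : ℝ} {z : ℂ}
    (hF : ∀ᶠ s in 𝓝 (‖z‖ ^ 2), HasDerivAt F (F' s) s) (hF' : HasDerivAt F' F'' (‖z‖ ^ 2)) :
    wDz (fun w => wDzbar (fun u => (F (‖u‖ ^ 2) : ℂ)) w) z =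
      ((F' (‖z‖ ^ 2) + F'' * ‖z‖ ^ 2 : ℝ) : ℂ) := by
  have hnear : ∀ᶠ w in 𝓝 z, HasDerivAt F (F' (‖w‖ ^ 2)) (‖w‖ ^ 2) :=
    (continuous_norm.pow 2).continuousAt.eventually hF
  have heq : (fun w => wDzbar (fun u => (F (‖u‖ ^ 2) : ℂ)) w) =ᶠ[𝓝 z]
      fun w => (F' (‖w‖ ^ 2) : ℂ) * w :=
    hnear.mono fun w hw => wDzbar_ofReal_comp_norm_sq hw
  rw [wDz, heq.fderiv_eq, ← wDz, wDz_ofReal_comp_norm_sq_mul_self hF']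

theorem hasDerivAt_neg_log_neg_log {t : ℝ} (ht : t ≠ 0) (hlog : Real.log t ≠ 0) :
    HasDerivAt (fun s => -Real.log (-Real.log s)) (-(t * Real.log t)⁻¹) t :=
  ((hasDerivAt_log ht).fun_neg.log (neg_ne_zero.2 hlog)).fun_neg.congr_deriv (by field_simp)

theorem hasDerivAt_neg_inv_mul_log {t : ℝ} (ht : t ≠ 0) (hlog : Real.log t ≠ 0) :
    HasDerivAt (fun s => -(s * Real.log s)⁻¹) ((Real.log t + 1) / (t * Real.log t) ^ 2) t :=
  ((hasDerivAt_mul_log ht).fun_inv (mul_ne_zero ht hlog)).fun_neg.congr_deriv (by ring)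

theorem stmt11_general (δ : ℝ) (hδ1 : 0 < δ) (z : ℂ)
    (h : ‖z‖ ^ 2 + δ ^ 2 < Real.exp (-1)) :
    wDz (fun w =>
        wDzbar (fun u => (↑(-Real.log (-Real.log (‖u‖ ^ 2 + δ ^ 2))) : ℂ)) w) z =
      (↑((‖z‖ ^ 2 - δ ^ 2 * Real.log (‖z‖ ^ 2 + δ ^ 2)) /
          ((Real.log (‖z‖ ^ 2 + δ ^ 2)) ^ 2 *
            (‖z‖ ^ 2 + δ ^ 2) ^ 2)) : ℂ) ∧
    0 ≤ (‖z‖ ^ 2 - δ ^ 2 * Real.log (‖z‖ ^ 2 + δ ^ 2)) /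
          ((Real.log (‖z‖ ^ 2 + δ ^ 2)) ^ 2 *
            (‖z‖ ^ 2 + δ ^ 2) ^ 2) := by
  have ht0 : 0 < ‖z‖ ^ 2 + δ ^ 2 := by positivity
  have ht1 : ‖z‖ ^ 2 + δ ^ 2 < 1 := h.trans (Real.exp_lt_one_iff.2 (by norm_num))
  have hlog : Real.log (‖z‖ ^ 2 + δ ^ 2) < 0 := log_neg ht0 ht1
  have hF : ∀ᶠ s in 𝓝 (‖z‖ ^ 2), HasDerivAt (fun x => -Real.log (-Real.log (x + δ ^ 2)))
      (-((s + δ ^ 2) * Real.log (s + δ ^ 2))⁻¹) s := by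
    have hnear : ∀ᶠ s in 𝓝 (‖z‖ ^ 2), s + δ ^ 2 ∈ Set.Ioo 0 1 :=
      (continuous_add_const _).continuousAt.preimage_mem_nhds (Ioo_mem_nhds ht0 ht1)
    exact hnear.mono fun s hs =>
      (hasDerivAt_neg_log_neg_log hs.1.ne' (log_neg hs.1 hs.2).ne).comp_add_const _ _
  have hF' := (hasDerivAt_neg_inv_mul_log ht0.ne' hlog.ne).comp_add_const (‖z‖ ^ 2) (δ ^ 2)
  have hnum : 0 ≤ ‖z‖ ^ 2 - δ ^ 2 * Real.log (‖z‖ ^ 2 + δ ^ 2) := by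
    linarith [sq_nonneg ‖z‖, mul_nonpos_of_nonneg_of_nonpos (sq_nonneg δ) hlog.le]
  refine ⟨?_, div_nonneg hnum (by positivity)⟩
  rw [wDz_wDzbar_ofReal_comp_norm_sq hF hF']
  congr 1
  field_simp
  ring

theorem stmt11 (δ : ℝ) (hδ1 : 0 < δ) (hδ2 : δ < 1) (z : ℂ)
    (h : ‖z‖ ^ 2 + δ ^ 2 < Real.exp (-1)) :
    wDz (fun w =>
        wDzbar (fun u => (↑(-Real.log (-Real.log (‖u‖ ^ 2 + δ ^ 2))) : ℂ)) w) z =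
      (↑((‖z‖ ^ 2 - δ ^ 2 * Real.log (‖z‖ ^ 2 + δ ^ 2)) /
          ((Real.log (‖z‖ ^ 2 + δ ^ 2)) ^ 2 *
            (‖z‖ ^ 2 + δ ^ 2) ^ 2)) : ℂ) ∧
    0 ≤ (‖z‖ ^ 2 - δ ^ 2 * Real.log (‖z‖ ^ 2 + δ ^ 2)) /
          ((Real.log (‖z‖ ^ 2 + δ ^ 2)) ^ 2 *
            (‖z‖ ^ 2 + δ ^ 2) ^ 2) :=
  stmt11_general δ hδ1 z h
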